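/- Let G be a graph, k ≥ 1, and r = (r_1, …, r_k) a vector of natural numbers with r_1 + ⋯ + r_k ≥ Δ(G) + 1 − k. If P = (V_1, …, V_k) is an r-partition of G (an ordered partition minimizing f(P)), then Δ(G[V_i]) ≤ r_i for each i ∈ {1, …, k}. -/

import Mathlib

open SimpleGraph

/-- `(V_1, …, V_k)` is an ordered partition: pairwise disjoint sets covering the vertices. -/
def IsOrderedPartition {V : Type*} {k : ℕ} (P : Fin k → Finset V) : Prop :=
  (∀ i j, i ≠ j → Disjoint (P i) (P j)) ∧ ∀ v, ∃ i, v ∈ P i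

/-- `f(P) = Σ_i (|E(G[V_i])| - r_i * |V_i|)`. -/
noncomputable def partitionWeight {V : Type*} [Fintype V] (G : SimpleGraph V) {k : ℕ}
    (r : Fin k → ℕ) (P : Fin k → Finset V) : ℤ :=
  ∑ i, ((Nat.card (G.induce (P i : Set V)).edgeSet : ℤ) - (r i : ℤ) * (P i).card)

/-- An `r`-partition: an ordered partition minimizing `f`. -/
def IsRPartition {V : Type*} [Fintype V] (G : SimpleGraph V) {k : ℕ}
    (r : Fin k → ℕ) (P : Fin k → Finset V) : Prop :=
  IsOrderedPartition P ∧
    ∀ Q : Fin k → Finset V, IsOrderedPartition Q →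
      partitionWeight G r P ≤ partitionWeight G r Q

/-
If a vertex `v ∈ V_i` had more than `r_i` neighbours in `V_i`, then, as its degree is at
most `Δ ≤ r_1 + ⋯ + r_k + k - 1`, some part `V_j` contains at most `r_j` of its neighbours,
and `j ≠ i`.
Moving `v` from `V_i` to `V_j` changes `f` by `(d_j(v) - r_j) - (d_i(v) - r_i) < 0`, where
`d_l(v)` is the number of neighbours of `v` in `V_l`; this contradicts the minimality of `P`.
-/

open Finset

namespace SimpleGraph

variable {V : Type*} (G : SimpleGraph V) [DecidableRel G.Adj]

theorem degree_induce_finset (S : Finset V) (x : (S : Set V)) :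
    (G.induce (S : Set V)).degree x = #{w ∈ S | G.Adj x w} := by
  rw [← card_neighborFinset_eq_degree, ← card_map (.subtype (· ∈ (S : Set V)))]
  congr 1
  ext w
  simp [and_comm]

theorem two_mul_card_edgeSet_induce (S : Finset V) :
    2 * Nat.card (G.induce (S : Set V)).edgeSet = ∑ x ∈ S, #{w ∈ S | G.Adj x w} := by
  rw [Nat.card_eq_fintype_card, ← edgeFinset_card, ← sum_degrees_eq_twice_card_edges]
  simp_rw [degree_induce_finset]
  exact sum_subtype S (fun _ => Iff.rfl) (fun x => #{w ∈ S | G.Adj x w}) |>.symm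

theorem card_edgeSet_induce_insert [DecidableEq V] {S : Finset V} {v : V}
    (hv : v ∉ S) :
    Nat.card (G.induce (↑(insert v S) : Set V)).edgeSet =
      Nat.card (G.induce (S : Set V)).edgeSet + #{w ∈ S | G.Adj v w} := by
  have h := two_mul_card_edgeSet_induce G (insert v S)
  have hx : ∀ x ∈ S, #{w ∈ insert v S | G.Adj x w} =
      #{w ∈ S | G.Adj x w} + if G.Adj x v then 1 else 0 := by
    intro x _
    rw [filter_insert]
    split_ifs
    · exact card_insert_of_notMem fun h => hv (mem_of_mem_filter v h)
    · rfl
  rw [sum_insert hv, filter_insert, if_neg (G.loopless.irrefl v), sum_congr rfl hx,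
    sum_add_distrib, ← two_mul_card_edgeSet_induce, sum_boole, Nat.cast_id] at h
  simp_rw [G.adj_comm _ v] at h
  omega

end SimpleGraph

namespace IsOrderedPartition

variable {V : Type*} {k : ℕ} {P : Fin k → Finset V}

theorem sum_card_filter (hP : IsOrderedPartition P) [Fintype V] [DecidableEq V] (p : V → Prop)
    [DecidablePred p] : ∑ j, #{w ∈ P j | p w} = #{w | p w} := by
  rw [← card_biUnion fun a _ b _ hab => disjoint_filter_filter (hP.1 a b hab)]
  congr 1
  ext w
  simpa using fun _ => hP.2 w

end IsOrderedPartition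

section Move

variable {V : Type*} [DecidableEq V] {k : ℕ}

def moveVertex (P : Fin k → Finset V) (v : V) (j : Fin k) : Fin k → Finset V :=
  fun l => if l = j then insert v (P l) else (P l).erase v

theorem mem_moveVertex {P : Fin k → Finset V} {v w : V} {j l : Fin k} :
    w ∈ moveVertex P v j l ↔ w = v ∧ l = j ∨ w ≠ v ∧ w ∈ P l := by
  unfold moveVertex
  split_ifs with h
  · simp only [h, mem_insert, and_true, ne_eq]
    tauto
  · simp only [mem_erase, ne_eq, h, and_false, false_or]

theorem IsOrderedPartition.moveVertex {P : Fin k → Finset V} (hP : IsOrderedPartition P) (v : V)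
    (j : Fin k) : IsOrderedPartition (moveVertex P v j) := by
  refine ⟨fun a b hab => disjoint_left.2 fun w ha hb => ?_, fun w => ?_⟩
  · rw [mem_moveVertex] at ha hb
    rcases ha with ⟨rfl, rfl⟩ | ⟨hwv, ha⟩
    · exact hab (hb.resolve_right (fun h => h.1 rfl)).2.symm
    · exact disjoint_left.1 (hP.1 a b hab) ha (hb.resolve_left (fun h => hwv h.1)).2
  · by_cases hwv : w = v
    · exact ⟨j, mem_moveVertex.2 (Or.inl ⟨hwv, rfl⟩)⟩
    · obtain ⟨l, hl⟩ := hP.2 w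
      exact ⟨l, mem_moveVertex.2 (Or.inr ⟨hwv, hl⟩)⟩

end Move

section Weight

variable {V : Type*} (G : SimpleGraph V)

noncomputable def partWeight (ρ : ℕ) (S : Finset V) : ℤ :=
  (Nat.card (G.induce (S : Set V)).edgeSet : ℤ) - (ρ : ℤ) * S.card

theorem partWeight_insert [DecidableEq V] [DecidableRel G.Adj] (ρ : ℕ) {S : Finset V} {v : V}
    (hv : v ∉ S) :
    partWeight G ρ (insert v S) = partWeight G ρ S + ((#{w ∈ S | G.Adj v w} : ℤ) - ρ) := by
  rw [partWeight, partWeight, G.card_edgeSet_induce_insert hv, card_insert_of_notMem hv]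
  push_cast
  ring

variable [Fintype V] {k : ℕ} (r : Fin k → ℕ)

theorem partitionWeight_eq_sum_partWeight (P : Fin k → Finset V) :
    partitionWeight G r P = ∑ i, partWeight G (r i) (P i) :=
  rfl

variable [DecidableEq V] [DecidableRel G.Adj]

theorem partitionWeight_moveVertex {P : Fin k → Finset V} (hP : IsOrderedPartition P)
    {i j : Fin k} {v : V} (hv : v ∈ P i) (hij : i ≠ j) :
    partitionWeight G r (moveVertex P v j) = partitionWeight G r P +
      ((#{w ∈ P j | G.Adj v w} : ℤ) - r j) - ((#{w ∈ P i | G.Adj v w} : ℤ) - r i) := by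
  have hvj : v ∉ P j := disjoint_left.1 (hP.1 i j hij) hv
  have hQi : moveVertex P v j i = (P i).erase v := if_neg hij
  have hQj : moveVertex P v j j = insert v (P j) := if_pos rfl
  have hQl (l : Fin k) (hlj : l ≠ j) (hli : l ≠ i) : moveVertex P v j l = P l := by
    rw [moveVertex, if_neg hlj, erase_eq_of_notMem (disjoint_left.1 (hP.1 i l (Ne.symm hli)) hv)]
  have hPi : partWeight G (r i) (P i) = partWeight G (r i) ((P i).erase v) +
      ((#{w ∈ P i | G.Adj v w} : ℤ) - r i) := by
    conv_lhs => rw [← insert_erase hv]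
    rw [partWeight_insert G _ (notMem_erase v _), filter_erase,
      erase_eq_of_notMem fun h => G.loopless.irrefl v (mem_filter.1 h).2]
  have hdiff : partitionWeight G r (moveVertex P v j) - partitionWeight G r P =
      (partWeight G (r j) (moveVertex P v j j) - partWeight G (r j) (P j)) +
        (partWeight G (r i) (moveVertex P v j i) - partWeight G (r i) (P i)) := by
    rw [partitionWeight_eq_sum_partWeight, partitionWeight_eq_sum_partWeight, ← sum_sub_distrib]
    exact Fintype.sum_eq_add j i hij.symm fun l hl => by rw [hQl l hl.1 hl.2, sub_self]
  rw [hQj, hQi, partWeight_insert G _ hvj, hPi] at hdiff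
  linarith

end Weight

theorem stmt_6_general {V : Type*} [Fintype V] [DecidableEq V] (G : SimpleGraph V) [DecidableRel G.Adj]
    (k : ℕ) (r : Fin k → ℕ)
    (hr : (∑ i, r i) + k ≥ G.maxDegree + 1)
    (P : Fin k → Finset V) (hP : IsRPartition G r P) :
    ∀ i : Fin k, ∀ v ∈ P i, ((P i).filter (fun w => G.Adj v w)).card ≤ r i := by
  intro i v hv
  by_contra! hi
  obtain ⟨j, -, hj⟩ : ∃ j ∈ univ, #{w ∈ P j | G.Adj v w} < r j + 1 := by
    apply exists_lt_of_sum_lt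
    rw [hP.1.sum_card_filter, ← neighborFinset_eq_filter, card_neighborFinset_eq_degree,
      sum_add_distrib, sum_const, card_univ, Fintype.card_fin, smul_eq_mul, mul_one]
    exact (G.degree_le_maxDegree v).trans_lt hr
  have hij : i ≠ j := by rintro rfl; omega
  have hmin := hP.2 _ (hP.1.moveVertex v j)
  rw [partitionWeight_moveVertex G r hP.1 hv hij] at hmin
  omega

theorem stmt_6 {V : Type*} [Fintype V] [DecidableEq V] (G : SimpleGraph V) [DecidableRel G.Adj]
    (k : ℕ) (hk : 1 ≤ k) (r : Fin k → ℕ)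
    (hr : (∑ i, r i) + k ≥ G.maxDegree + 1)
    (P : Fin k → Finset V) (hP : IsRPartition G r P) :
    ∀ i : Fin k, ∀ v ∈ P i, ((P i).filter (fun w => G.Adj v w)).card ≤ r i :=
  stmt_6_general G k r hr P hP
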